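/- arXiv:2409.20317 — 5 statements merged into one kernel-verified Lean document; each statement's English description precedes it below -/
import Mathlib

section
/- Let $k$ be a field containing all $n$-th roots of unity with $\mathrm{char}(k) \nmid n$, and let $a \in k^\times$. Then there is a $k$-algebra isomorphism $k[x]/(x^n - a) \cong k(\sqrt[n]{a})^{l}$, where $l = n / [k(\sqrt[n]{a}) : k]$. -/
/-!
Let `d = [k(α) : k]`. Every conjugate of `α` is a root of `x^n - a`, hence of the form `ζ^i α`,
so the norm of `α` is a power of `ζ` times `α^d` and therefore `α^d = b ∈ k`. Together with
`α^n = a` this gives `α^gcd(d, n) ∈ k`, so `d ≤ gcd(d, n)`, i.e. `d ∣ n`. Writing `n = d m`,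
`x^n - a = ∏_{j < m} (x^d - ζ^(d j) b)`; the factors differ by nonzero constants, so they are
pairwise coprime, and `x^d - ζ^(d j) b` is the minimal polynomial of `ζ^j α`, which generates
`k(α)`. The Chinese remainder theorem then splits `k[x]/(x^n - a)` into `m` copies of `k(α)`.
-/

open Polynomial IntermediateField

theorem Multiset.exists_prod_eq_pow_mul_pow_card {M : Type*} [CommMonoid M] {ζ α : M}
    {s : Multiset M} (hs : ∀ r ∈ s, ∃ i : ℕ, r = ζ ^ i * α) :
    ∃ j : ℕ, s.prod = ζ ^ j * α ^ card s := by
  induction s using Multiset.induction with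
  | empty => exact ⟨0, by simp⟩
  | cons r s ih =>
    obtain ⟨i, rfl⟩ := hs r (mem_cons_self r s)
    obtain ⟨j, hj⟩ := ih fun x hx => hs x (mem_cons_of_mem hx)
    exact ⟨i + j, by rw [prod_cons, hj, card_cons, pow_add, pow_succ]; ac_rfl⟩

theorem IsPrimitiveRoot.exists_eq_pow_mul_of_pow_eq {K : Type*} [Field K] {ζ : K} {n : ℕ}
    [NeZero n] (hζ : IsPrimitiveRoot ζ n) {r α : K} (hα : α ≠ 0) (h : r ^ n = α ^ n) :
    ∃ i : ℕ, r = ζ ^ i * α := by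
  obtain ⟨i, -, hi⟩ := hζ.eq_pow_of_pow_eq_one (ξ := r / α)
    (by rw [div_pow, h, div_self (pow_ne_zero n hα)])
  exact ⟨i, by rw [hi, div_mul_cancel₀ r hα]⟩

theorem Polynomial.X_pow_mul_sub_C_pow_eq_prod {R : Type*} [CommRing R] [IsDomain R] {m : ℕ}
    {η : R} (hη : IsPrimitiveRoot η m) (hm : 0 < m) (d : ℕ) (b : R) :
    X ^ (d * m) - C (b ^ m) = ∏ j : Fin m, (X ^ d - C (η ^ (j : ℕ) * b)) := by
  have h := congrArg (fun p => p.comp (X ^ d)) (X_pow_sub_C_eq_prod hη hm (rfl : b ^ m = b ^ m))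
  simp only [sub_comp, X_pow_comp, C_comp, prod_comp, X_comp, ← pow_mul] at h
  rw [h, Fin.prod_univ_eq_prod_range (fun j => X ^ d - C (η ^ j * b))]

theorem Polynomial.isCoprime_X_pow_sub_C_of_ne {F : Type*} [Field F] (d : ℕ) {c c' : F}
    (h : c ≠ c') : IsCoprime (X ^ d - C c) (X ^ d - C c') := by
  refine ⟨C (c' - c)⁻¹, -C (c' - c)⁻¹, ?_⟩
  rw [neg_mul, ← sub_eq_add_neg, ← mul_sub, sub_sub_sub_cancel_left, ← C_sub, ← C_mul,
    inv_mul_cancel₀ (sub_ne_zero.mpr h.symm), C_1]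

noncomputable def AdjoinRoot.prodAlgEquivPi {R ι : Type*} [CommRing R] [Fintype ι]
    (f : ι → R[X]) (hf : Pairwise fun i j => IsCoprime (f i) (f j)) :
    AdjoinRoot (∏ i, f i) ≃ₐ[R] ((i : ι) → AdjoinRoot (f i)) :=
  (Ideal.quotientEquivAlgOfEq R (Ideal.iInf_span_singleton fun _ _ hij => hf hij).symm).trans <|
    AlgEquiv.ofRingEquiv (f := Ideal.quotientInfRingEquivPiQuotient _ fun _ _ hij =>
      (Ideal.isCoprime_span_singleton_iff _ _).mpr (hf hij)) fun _ => rfl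

section AdjoinPowRoot

variable {k K : Type*} [Field k] [Field K] [Algebra k K]

theorem exists_pow_gcd_eq_algebraMap {α : K} (hα : α ≠ 0) {m n : ℕ} {b a : k}
    (hm : α ^ m = algebraMap k K b) (hn : α ^ n = algebraMap k K a) :
    ∃ c : k, α ^ m.gcd n = algebraMap k K c := by
  refine ⟨b ^ m.gcdA n * a ^ m.gcdB n, ?_⟩
  rw [← zpow_natCast, Nat.gcd_eq_gcd_ab, zpow_add₀ hα, zpow_mul, zpow_mul, zpow_natCast,
    zpow_natCast, hm, hn, map_mul, map_zpow₀, map_zpow₀]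

theorem adjoin_simple_algebraMap_mul {c : k} (hc : c ≠ 0) (α : K) :
    k⟮algebraMap k K c * α⟯ = k⟮α⟯ := by
  have hc' : algebraMap k K c ≠ 0 := (_root_.map_ne_zero _).mpr hc
  apply le_antisymm <;> rw [adjoin_simple_le_iff]
  · exact mul_mem (IntermediateField.algebraMap_mem _ c) (mem_adjoin_simple_self k α)
  · simpa [inv_mul_cancel_left₀ hc'] using
      mul_mem (inv_mem (IntermediateField.algebraMap_mem k⟮algebraMap k K c * α⟯ c))
        (mem_adjoin_simple_self k _)

noncomputable def adjoinRootEquivAdjoinOfMonic {β : K} {f : k[X]} (hf : f.Monic)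
    (hβ : aeval β f = 0) (hdeg : f.natDegree ≤ Module.finrank k k⟮β⟯) :
    AdjoinRoot f ≃ₐ[k] k⟮β⟯ :=
  have hint : IsIntegral k β := ⟨f, hf, hβ⟩
  have hmin : f = minpoly k β := minpoly.unique_of_degree_le_degree_minpoly k β hf hβ <| by
    rw [degree_eq_natDegree hf.ne_zero, degree_eq_natDegree (minpoly.ne_zero hint),
      ← adjoin.finrank hint]
    exact_mod_cast hdeg
  (AdjoinRoot.algEquivOfEq k f _ hmin).trans (adjoinRootEquivAdjoin k hint)

theorem exists_pow_finrank_adjoin_eq_algebraMap [IsAlgClosed K] {n : ℕ} [NeZero n] {ζ : k}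
    (hζ : IsPrimitiveRoot ζ n) {α : K} (hα0 : α ≠ 0) {a : k} (hα : α ^ n = algebraMap k K a) :
    ∃ b : k, α ^ Module.finrank k k⟮α⟯ = algebraMap k K b := by
  have hint : IsIntegral k α := (hα ▸ isIntegral_algebraMap).of_pow (NeZero.pos n)
  have hdvd : minpoly k α ∣ X ^ n - C a := minpoly.dvd k α (by simp [hα])
  have hroots : ∀ r ∈ (minpoly k α).aroots K, ∃ i : ℕ, r = algebraMap k K ζ ^ i * α := by
    intro r hr
    have hr' := aeval_eq_zero_of_dvd_aeval_eq_zero hdvd (mem_aroots.mp hr).2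
    exact (hζ.map_of_injective (algebraMap k K).injective).exists_eq_pow_mul_of_pow_eq hα0
      (by simpa [sub_eq_zero, hα] using hr')
  have hcard : Multiset.card ((minpoly k α).aroots K) = Module.finrank k k⟮α⟯ := by
    rw [aroots_def, ← (IsAlgClosed.splits _).natDegree_eq_card_roots, natDegree_map,
      adjoin.finrank hint]
  obtain ⟨j, hj⟩ := Multiset.exists_prod_eq_pow_mul_pow_card hroots
  refine ⟨(ζ ^ j)⁻¹ * Algebra.norm k (AdjoinSimple.gen k α), ?_⟩
  rw [map_mul, AdjoinSimple.norm_gen_eq_prod_roots α (IsAlgClosed.splits _), hj,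
    hcard, map_inv₀, map_pow, inv_mul_cancel_left₀]
  exact pow_ne_zero j ((_root_.map_ne_zero _).mpr (hζ.ne_zero (NeZero.ne n)))

theorem finrank_adjoin_dvd_of_pow_eq_algebraMap {α : K} (hα0 : α ≠ 0) {n : ℕ} (hn : n ≠ 0)
    {a b : k} (hα : α ^ n = algebraMap k K a)
    (hb : α ^ Module.finrank k k⟮α⟯ = algebraMap k K b) :
    Module.finrank k k⟮α⟯ ∣ n := by
  have hint : IsIntegral k α := (hα ▸ isIntegral_algebraMap).of_pow (Nat.pos_of_ne_zero hn)
  obtain ⟨c, hc⟩ := exists_pow_gcd_eq_algebraMap hα0 hb hα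
  have hg : (Module.finrank k k⟮α⟯).gcd n ≠ 0 := Nat.gcd_ne_zero_right hn
  have hle : Module.finrank k k⟮α⟯ ≤ (Module.finrank k k⟮α⟯).gcd n := by
    have hmin := minpoly.min k α (monic_X_pow_sub_C c hg) (by simp [hc])
    simpa [adjoin.finrank hint] using natDegree_le_natDegree hmin
  have hpos : 0 < Module.finrank k k⟮α⟯ := adjoin.finrank hint ▸ minpoly.natDegree_pos hint
  exact Nat.gcd_eq_left_iff_dvd.mp (le_antisymm (Nat.gcd_le_left n hpos) hle)

noncomputable def adjoinRootXPowFinrankSubCEquiv {α : K} (hα : IsIntegral k α) {c e : k}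
    (hc : c ≠ 0) (h : (algebraMap k K c * α) ^ Module.finrank k k⟮α⟯ = algebraMap k K e) :
    AdjoinRoot (X ^ Module.finrank k k⟮α⟯ - C e) ≃ₐ[k] k⟮α⟯ :=
  have hpos : 0 < Module.finrank k k⟮α⟯ := adjoin.finrank hα ▸ minpoly.natDegree_pos hα
  (adjoinRootEquivAdjoinOfMonic (monic_X_pow_sub_C e hpos.ne') (by simp [h])
    (by rw [natDegree_X_pow_sub_C, adjoin_simple_algebraMap_mul hc])).trans
    (equivOfEq (adjoin_simple_algebraMap_mul hc α))

end AdjoinPowRoot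

theorem stmt_3_general {k K : Type*} [Field k] [Field K] [Algebra k K] [IsAlgClosure k K]
    (n : ℕ) (hn : 0 < n)
    (ζ : k) (hζ : IsPrimitiveRoot ζ n)
    (a : k) (ha : a ≠ 0) (α : K) (hα : α ^ n = algebraMap k K a) :
    Nonempty (AdjoinRoot (X ^ n - C a : Polynomial k) ≃ₐ[k]
      (Fin (n / Module.finrank k (IntermediateField.adjoin k ({α} : Set K)))
        → IntermediateField.adjoin k ({α} : Set K))) := by
  have : IsAlgClosed K := IsAlgClosure.isAlgClosed k
  have : NeZero n := ⟨hn.ne'⟩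
  have hint : IsIntegral k α := (hα ▸ isIntegral_algebraMap).of_pow hn
  have hα0 : α ≠ 0 := by
    rintro rfl
    exact ha ((algebraMap k K).injective (by simpa [hn.ne'] using hα.symm))
  obtain ⟨b, hb⟩ := exists_pow_finrank_adjoin_eq_algebraMap hζ hα0 hα
  set d := Module.finrank k k⟮α⟯
  obtain ⟨m, rfl⟩ : d ∣ n := finrank_adjoin_dvd_of_pow_eq_algebraMap hα0 hn.ne' hα hb
  have hd0 : 0 < d := Nat.pos_of_mul_pos_right hn
  have hm0 : 0 < m := Nat.pos_of_mul_pos_left hn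
  have hbm : b ^ m = a := (algebraMap k K).injective (by rw [map_pow, ← hb, ← pow_mul, hα])
  have hb0 : b ≠ 0 := by
    rintro rfl
    exact ha (hbm ▸ zero_pow hm0.ne')
  have hη : IsPrimitiveRoot (ζ ^ d) m := hζ.pow hn rfl
  have hroot (j : Fin m) :
      (algebraMap k K (ζ ^ (j : ℕ)) * α) ^ d = algebraMap k K ((ζ ^ d) ^ (j : ℕ) * b) := by
    rw [mul_pow, hb, ← map_pow, ← map_mul, ← pow_mul, ← pow_mul, mul_comm d]
  have hcop : Pairwise fun i j : Fin m =>
      IsCoprime (X ^ d - C ((ζ ^ d) ^ (i : ℕ) * b)) (X ^ d - C ((ζ ^ d) ^ (j : ℕ) * b)) :=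
    fun i j hij => isCoprime_X_pow_sub_C_of_ne d fun h =>
      hij (Fin.ext (hη.pow_inj i.2 j.2 (mul_right_cancel₀ hb0 h)))
  rw [← hbm, X_pow_mul_sub_C_pow_eq_prod hη hm0, Nat.mul_div_cancel_left m hd0]
  exact ⟨(AdjoinRoot.prodAlgEquivPi _ hcop).trans <| AlgEquiv.piCongrRight fun j =>
    adjoinRootXPowFinrankSubCEquiv hint (pow_ne_zero _ (hζ.ne_zero hn.ne')) (hroot j)⟩

/-- `k[x]/(x^n - a) ≅ k(ⁿ√a)^l` where `l = n / [k(ⁿ√a) : k]`. -/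
theorem stmt_3 {k K : Type*} [Field k] [Field K] [Algebra k K] [IsAlgClosure k K]
    (n : ℕ) (hn : 0 < n) (hchar : (n : k) ≠ 0)
    (ζ : k) (hζ : IsPrimitiveRoot ζ n)
    (a : k) (ha : a ≠ 0) (α : K) (hα : α ^ n = algebraMap k K a) :
    Nonempty (AdjoinRoot (X ^ n - C a : Polynomial k) ≃ₐ[k]
      (Fin (n / Module.finrank k (IntermediateField.adjoin k ({α} : Set K)))
        → IntermediateField.adjoin k ({α} : Set K))) :=
  stmt_3_general n hn ζ hζ a ha α hα
end

section
/- Let $k$ be a field containing all $n$-th roots of unity with $\mathrm{char}(k) \nmid n$, and let $a, b \in k^\times$. Then the $k$-algebras $k[x]/(x^n - a)$ and $k[x]/(x^n - b)$ are isomorphic as $k$-algebras if and only if $k(\sqrt[n]{a}) = k(\sqrt[n]{b})$ as subfields of a fixed algebraic closure of $k$. -/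
/-!
When `k` contains the `n`-th roots of unity, two `n`-th roots of the same nonzero element differ
by a factor from `k`, so every root of `Xⁿ - a` generates the same field `k(ⁿ√a)`. As `Xⁿ - a` is
separable, the Chinese remainder theorem splits `k[X]/(Xⁿ - a)` into a product of copies of
`k(ⁿ√a)`, one for each irreducible factor; counting dimensions, there are `n / [k(ⁿ√a) : k]` of
them. Hence equal fields give isomorphic algebras. Conversely, an isomorphism
`k[X]/(Xⁿ - a) ≃ k[X]/(Xⁿ - b)` followed by evaluation at `ⁿ√b` produces an `n`-th root of `a`
inside `k(ⁿ√b)`.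
-/

open Polynomial IntermediateField UniqueFactorizationMonoid

namespace AdjoinRoot

variable {R : Type*} [CommRing R]

theorem exists_aeval_eq_zero_of_algHom {f g : R[X]} (φ : AdjoinRoot f →ₐ[R] AdjoinRoot g)
    {L : Type*} [CommRing L] [Algebra R L] {β : L} (hβ : aeval β g = 0) :
    ∃ γ : L, aeval γ f = 0 :=
  ⟨_, aeval_algHom_eq_zero f ((liftAlgHom g (Algebra.ofId R L) β hβ).comp φ)⟩

noncomputable def algEquivPiOfPairwiseCoprime {ι : Type*} [Fintype ι] {f : R[X]} (p : ι → R[X])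
    (hp : Pairwise fun i j => IsCoprime (p i) (p j)) (hf : Associated (∏ i, p i) f) :
    AdjoinRoot f ≃ₐ[R] Π i, AdjoinRoot (p i) :=
  AlgEquiv.ofRingEquiv (f := (Ideal.quotEquivOfEq (by
      obtain ⟨u, rfl⟩ := hf
      rw [Ideal.iInf_span_singleton fun i j hij => hp hij,
        Ideal.span_singleton_mul_right_unit u.isUnit])).trans
    (Ideal.quotientInfRingEquivPiQuotient _ fun i j hij =>
      (Ideal.isCoprime_span_singleton_iff _ _).mpr (hp hij))) fun _ => rfl

end AdjoinRoot

theorem UniqueFactorizationMonoid.isCoprime_of_mem_normalizedFactors {R : Type*} [CommRing R]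
    [IsDomain R] [IsBezout R] [NormalizationMonoid R] [UniqueFactorizationMonoid R] {f g h : R}
    (hg : g ∈ normalizedFactors f) (hh : h ∈ normalizedFactors f) (hne : g ≠ h) :
    IsCoprime g h := by
  have hirr := irreducible_of_normalized_factor g hg
  rw [hirr.coprime_iff_not_dvd]
  exact fun hdvd => hne <|
    (hirr.associated_of_dvd (irreducible_of_normalized_factor h hh) hdvd).eq_of_normalized
      (normalize_normalized_factor g hg) (normalize_normalized_factor h hh)

section

variable {k K : Type*} [Field k] [Field K] [Algebra k K]

noncomputable def AdjoinRoot.algEquivAdjoinOfIrreducible {g : k[X]} (hg : Irreducible g) {γ : K}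
    (hγ : aeval γ g = 0) : AdjoinRoot g ≃ₐ[k] k⟮γ⟯ :=
  have hint : IsIntegral k γ := IsAlgebraic.isIntegral ⟨g, hg.ne_zero, hγ⟩
  (algEquivOfAssociated k g _
    ((minpoly.irreducible hint).associated_of_dvd hg (minpoly.dvd k γ hγ)).symm).trans
    (adjoinRootEquivAdjoin k hint)

theorem IntermediateField.mem_of_pow_eq_pow {n : ℕ} (hn : 0 < n) {ζ : k}
    (hζ : IsPrimitiveRoot ζ n) {L : IntermediateField k K} {γ δ : K} (h : γ ^ n = δ ^ n)
    (hδ : δ ≠ 0) (hδL : δ ∈ L) :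
    γ ∈ L := by
  have : NeZero n := ⟨hn.ne'⟩
  obtain ⟨j, -, hj⟩ := (hζ.map_of_injective (algebraMap k K).injective).eq_pow_of_pow_eq_one
    (show (γ / δ) ^ n = 1 by rw [div_pow, h, div_self (pow_ne_zero _ hδ)])
  rw [← div_mul_cancel₀ γ hδ, ← hj, ← map_pow]
  exact mul_mem (L.algebraMap_mem _) hδL

theorem IntermediateField.adjoin_simple_eq_of_pow_eq_pow {n : ℕ} (hn : 0 < n) {ζ : k}
    (hζ : IsPrimitiveRoot ζ n) {γ δ : K} (h : γ ^ n = δ ^ n) (hγ : γ ≠ 0) (hδ : δ ≠ 0) :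
    k⟮γ⟯ = k⟮δ⟯ :=
  le_antisymm
    (adjoin_simple_le_iff.mpr (mem_of_pow_eq_pow hn hζ h hδ (mem_adjoin_simple_self k δ)))
    (adjoin_simple_le_iff.mpr (mem_of_pow_eq_pow hn hζ h.symm hγ (mem_adjoin_simple_self k γ)))

theorem AdjoinRoot.exists_algEquiv_fin_pi_of_squarefree [DecidableEq k] {f : k[X]}
    (hf : Squarefree f) (F : IntermediateField k K) [FiniteDimensional k F]
    (hF : ∀ g ∈ normalizedFactors f, ∃ γ : K, aeval γ g = 0 ∧ k⟮γ⟯ = F) :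
    ∃ m : ℕ, m * Module.finrank k F = f.natDegree ∧ Nonempty (AdjoinRoot f ≃ₐ[k] (Fin m → F)) := by
  set s := (normalizedFactors f).toFinset
  have hirr : ∀ g ∈ s, Irreducible g := fun g hg =>
    irreducible_of_normalized_factor g (Multiset.mem_toFinset.mp hg)
  have hcop : Pairwise fun g h : s => IsCoprime (g : k[X]) h := fun g h hne =>
    isCoprime_of_mem_normalizedFactors (Multiset.mem_toFinset.mp g.2)
      (Multiset.mem_toFinset.mp h.2) (Subtype.coe_injective.ne hne)
  have hprod : Associated (∏ g : s, (g : k[X])) f := by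
    have hnodup := (squarefree_iff_nodup_normalizedFactors hf.ne_zero).mp hf
    rw [Finset.prod_coe_sort s fun g => g, Finset.prod_eq_multiset_prod, Multiset.toFinset_val,
      hnodup.dedup, Multiset.map_id']
    exact prod_normalizedFactors hf.ne_zero
  choose γ hγ hγF using hF
  let e : AdjoinRoot f ≃ₐ[k] (Fin s.card → F) :=
    (algEquivPiOfPairwiseCoprime _ hcop hprod).trans <|
    (AlgEquiv.piCongrRight fun g : s => (algEquivAdjoinOfIrreducible (hirr g g.2)
      (hγ g.1 (Multiset.mem_toFinset.mp g.2))).trans (equivOfEq (hγF g.1 _))).trans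
    (AlgEquiv.piCongrLeft' k (fun _ => F) s.equivFin)
  refine ⟨s.card, ?_, ⟨e⟩⟩
  have hrank := e.toLinearEquiv.finrank_eq
  rw [Module.finrank_pi_fintype, Finset.sum_const, Finset.card_univ, Fintype.card_fin,
    smul_eq_mul] at hrank
  rw [← hrank]
  exact finrank_quotient_span_eq_natDegree

theorem ne_zero_of_pow_eq_algebraMap {n : ℕ} (hn : n ≠ 0) {a : k} (ha : a ≠ 0) {x : K}
    (hx : x ^ n = algebraMap k K a) : x ≠ 0 := by
  rintro rfl
  exact ha (by simpa [zero_pow hn] using hx.symm)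

theorem adjoin_le_of_algHom_adjoinRoot_X_pow_sub_C {n : ℕ} (hn : 0 < n) {ζ : k}
    (hζ : IsPrimitiveRoot ζ n) {a b : k} (ha : a ≠ 0) {α β : K} (hα : α ^ n = algebraMap k K a)
    (hβ : β ^ n = algebraMap k K b)
    (φ : AdjoinRoot (X ^ n - C a) →ₐ[k] AdjoinRoot (X ^ n - C b)) :
    k⟮α⟯ ≤ k⟮β⟯ := by
  obtain ⟨γ, hγ⟩ := AdjoinRoot.exists_aeval_eq_zero_of_algHom φ (β := AdjoinSimple.gen k β)
    (Subtype.val_injective (by simp [hβ]))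
  have hγa : (γ : K) ^ n = algebraMap k K a := by
    simpa [sub_eq_zero] using congrArg (algebraMap k⟮β⟯ K) hγ
  exact adjoin_simple_le_iff.mpr <| mem_of_pow_eq_pow hn hζ (hα.trans hγa.symm)
    (ne_zero_of_pow_eq_algebraMap hn.ne' ha hγa) γ.2

theorem AdjoinRoot.exists_algEquiv_fin_pi_adjoin_X_pow_sub_C [IsAlgClosure k K] {n : ℕ}
    (hn : 0 < n) (hchar : (n : k) ≠ 0) {ζ : k} (hζ : IsPrimitiveRoot ζ n) {a : k} (ha : a ≠ 0)
    {α : K} (hα : α ^ n = algebraMap k K a) :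
    ∃ m : ℕ, m * Module.finrank k k⟮α⟯ = n ∧
      Nonempty (AdjoinRoot (X ^ n - C a) ≃ₐ[k] (Fin m → k⟮α⟯)) := by
  classical
  have : IsAlgClosed K := IsAlgClosure.isAlgClosed k
  have : FiniteDimensional k k⟮α⟯ := adjoin.finiteDimensional (Algebra.IsIntegral.isIntegral α)
  have hroots : ∀ g ∈ normalizedFactors (X ^ n - C a), ∃ γ : K, aeval γ g = 0 ∧ k⟮γ⟯ = k⟮α⟯ := by
    intro g hg
    obtain ⟨γ, hγ⟩ := IsAlgClosed.exists_aeval_eq_zero K g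
      (degree_pos_of_irreducible (irreducible_of_normalized_factor g hg)).ne'
    have hγa : γ ^ n = algebraMap k K a := by
      obtain ⟨q, hq⟩ := dvd_of_mem_normalizedFactors hg
      simpa [sub_eq_zero, hγ] using congrArg (aeval γ) hq
    exact ⟨γ, hγ, adjoin_simple_eq_of_pow_eq_pow hn hζ (hγa.trans hα.symm)
      (ne_zero_of_pow_eq_algebraMap hn.ne' ha hγa) (ne_zero_of_pow_eq_algebraMap hn.ne' ha hα)⟩
  simpa only [natDegree_X_pow_sub_C] using
    exists_algEquiv_fin_pi_of_squarefree (separable_X_pow_sub_C a hchar ha).squarefree _ hroots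

end

/-- `k[x]/(x^n - a) ≅ k[x]/(x^n - b)` as `k`-algebras iff `k(ⁿ√a) = k(ⁿ√b)` inside a
fixed algebraic closure. -/
theorem stmt_4 {k K : Type*} [Field k] [Field K] [Algebra k K] [IsAlgClosure k K]
    (n : ℕ) (hn : 0 < n) (hchar : (n : k) ≠ 0)
    (ζ : k) (hζ : IsPrimitiveRoot ζ n)
    (a b : k) (ha : a ≠ 0) (hb : b ≠ 0)
    (α β : K) (hα : α ^ n = algebraMap k K a) (hβ : β ^ n = algebraMap k K b) :
    Nonempty (AdjoinRoot (X ^ n - C a : Polynomial k) ≃ₐ[k]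
        AdjoinRoot (X ^ n - C b : Polynomial k))
      ↔ IntermediateField.adjoin k ({α} : Set K)
          = IntermediateField.adjoin k ({β} : Set K) := by
  refine ⟨fun ⟨e⟩ => le_antisymm ?_ ?_, fun h => ?_⟩
  · exact adjoin_le_of_algHom_adjoinRoot_X_pow_sub_C hn hζ ha hα hβ e
  · exact adjoin_le_of_algHom_adjoinRoot_X_pow_sub_C hn hζ hb hβ hα e.symm
  obtain ⟨m, hm, ⟨ea⟩⟩ := AdjoinRoot.exists_algEquiv_fin_pi_adjoin_X_pow_sub_C hn hchar hζ ha hα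
  obtain ⟨m', hm', ⟨eb⟩⟩ := AdjoinRoot.exists_algEquiv_fin_pi_adjoin_X_pow_sub_C hn hchar hζ hb hβ
  rw [← h] at eb hm'
  have : FiniteDimensional k k⟮α⟯ := adjoin.finiteDimensional (Algebra.IsIntegral.isIntegral α)
  obtain rfl : m = m' := Nat.eq_of_mul_eq_mul_right Module.finrank_pos (hm.trans hm'.symm)
  exact ⟨ea.trans eb.symm⟩
end

section
/- (Kummer theory) Let $k$ be a field containing all $n$-th roots of unity with $\mathrm{char}(k) \nmid n$, and let $a, b \in k^\times$. Then $k(\sqrt[n]{a}) = k(\sqrt[n]{b})$ as subfields of a fixed algebraic closure of $k$ if and only if the classes $[a]$ and $[b]$ generate the same subgroup of $k^\times / (k^\times)^n$. -/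
/-!
If `α = c β ^ r` with `c ∈ k`, then `a = c ^ n b ^ r`; conversely such a relation makes `α` a
root-of-unity multiple of `c β ^ r`, which lies in `k(β)`. The substance is that `α ∈ k(β)` forces
such a relation. The field `k(β)` is the splitting field of the separable polynomial `X ^ n - b`,
and `σ ↦ σ β / β` embeds its Galois group `G` into the roots of unity. Hence `G` is cyclic and the
character `σ ↦ σ α / α` is a power `σ ↦ (σ β / β) ^ r`, so `α / β ^ r` is fixed by `G` and lies
in `k`.
-/

open Polynomial IntermediateField

theorem MonoidHom.exists_forall_eq_pow_of_injective {G R : Type*} [Group G] [Finite G]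
    [CommRing R] [IsDomain R] {χ : G →* R} (hχ : Function.Injective χ) (ψ : G →* R) :
    ∃ r : ℕ, ∀ g, ψ g = χ g ^ r := by
  have := isCyclic_of_injective_ringHom χ hχ
  obtain ⟨σ, hσ⟩ := IsCyclic.exists_generator (α := G)
  have hχσ : IsPrimitiveRoot (χ σ) (orderOf σ) :=
    orderOf_injective χ hχ σ ▸ IsPrimitiveRoot.orderOf _
  have : NeZero (orderOf σ) := ⟨(orderOf_pos σ).ne'⟩
  obtain ⟨r, -, hr⟩ := hχσ.eq_pow_of_pow_eq_one (ξ := ψ σ) <| by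
    rw [← map_pow, pow_orderOf_eq_one, map_one]
  refine ⟨r, fun g => ?_⟩
  obtain ⟨j, rfl⟩ := mem_powers_iff_mem_zpowers.mpr (hσ g)
  rw [map_pow, map_pow, ← hr, ← pow_mul, ← pow_mul, mul_comm]

theorem QuotientGroup.mk_mem_zpowers_mk_iff {G : Type*} [CommGroup G] (n : ℕ) (a b : G) :
    (mk a : G ⧸ (powMonoidHom n : G →* G).range) ∈ Subgroup.zpowers (mk b) ↔
      ∃ (c : G) (r : ℤ), a = c ^ n * b ^ r := by
  simp only [Subgroup.mem_zpowers_iff, ← mk_zpow, QuotientGroup.eq, MonoidHom.mem_range,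
    powMonoidHom_apply]
  constructor
  · rintro ⟨r, c, hc⟩
    exact ⟨c, r, by simp [hc]⟩
  · rintro ⟨c, r, rfl⟩
    exact ⟨r, c, by simp⟩

section Kummer

variable {k L : Type*} [Field k] [Field L] [Algebra k L] {n : ℕ} [NeZero n] {ζ : k}

theorem IsPrimitiveRoot.exists_eq_algebraMap_mul_of_pow_eq_pow (hζ : IsPrimitiveRoot ζ n)
    {x y : L} (h : x ^ n = y ^ n) : ∃ t : k, x = algebraMap k L t * y := by
  have hx : x ∈ nthRoots n (y ^ n) := (mem_nthRoots (NeZero.pos n)).2 h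
  rw [(hζ.map_of_injective (algebraMap k L).injective).nthRoots_eq rfl] at hx
  obtain ⟨i, -, hi⟩ := Multiset.mem_map.mp hx
  exact ⟨ζ ^ i, by rw [map_pow, hi]⟩

theorem IsPrimitiveRoot.exists_apply_eq_algebraMap_mul (hζ : IsPrimitiveRoot ζ n)
    (σ : Gal(L/k)) {γ : L} (hγ : γ ^ n ∈ Set.range (algebraMap k L)) :
    ∃ t : k, σ γ = algebraMap k L t * γ := by
  obtain ⟨c, hc⟩ := hγ
  exact hζ.exists_eq_algebraMap_mul_of_pow_eq_pow <| by rw [← map_pow, ← hc, σ.commutes]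

def kummerCharacter (hζ : IsPrimitiveRoot ζ n) {γ : L} (hγ : γ ≠ 0)
    (hγn : γ ^ n ∈ Set.range (algebraMap k L)) : Gal(L/k) →* L where
  toFun σ := σ γ / γ
  map_one' := div_self hγ
  map_mul' σ τ := by
    -- `τ γ / γ` lies in `k`, so `σ` fixes it
    obtain ⟨t, ht⟩ := hζ.exists_apply_eq_algebraMap_mul τ hγn
    simp only [AlgEquiv.mul_apply, ht, map_mul, AlgEquiv.commutes]
    field_simp

theorem kummerCharacter_mul_self (hζ : IsPrimitiveRoot ζ n) {γ : L} (hγ : γ ≠ 0)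
    (hγn : γ ^ n ∈ Set.range (algebraMap k L)) (σ : Gal(L/k)) :
    kummerCharacter hζ hγ hγn σ * γ = σ γ :=
  div_mul_cancel₀ _ hγ

theorem exists_eq_algebraMap_mul_pow_of_injective_kummerCharacter [FiniteDimensional k L]
    [IsGalois k L] (hζ : IsPrimitiveRoot ζ n) {α β : L} (hα : α ≠ 0) (hβ : β ≠ 0)
    (hαn : α ^ n ∈ Set.range (algebraMap k L)) (hβn : β ^ n ∈ Set.range (algebraMap k L))
    (hinj : Function.Injective (kummerCharacter hζ hβ hβn)) :
    ∃ (c : k) (r : ℕ), α = algebraMap k L c * β ^ r := by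
  obtain ⟨r, hr⟩ := MonoidHom.exists_forall_eq_pow_of_injective hinj (kummerCharacter hζ hα hαn)
  obtain ⟨c, hc⟩ := (IsGalois.mem_range_algebraMap_iff_fixed (α / β ^ r)).mpr fun σ => by
    have hσ : kummerCharacter hζ hβ hβn σ ≠ 0 := ((Group.isUnit σ).map _).ne_zero
    rw [map_div₀, map_pow, ← kummerCharacter_mul_self hζ hα hαn,
      ← kummerCharacter_mul_self hζ hβ hβn, hr, mul_pow, mul_div_mul_left _ _ (pow_ne_zero r hσ)]
  exact ⟨c, r, by rw [hc, div_mul_cancel₀ _ (pow_ne_zero r hβ)]⟩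

theorem mem_rootSet_X_pow_sub_C {x : L} {b : k} :
    x ∈ (X ^ n - C b).rootSet L ↔ x ^ n = algebraMap k L b := by
  rw [mem_rootSet_of_ne (X_pow_sub_C_ne_zero (NeZero.pos n) b), aeval_def, eval₂_sub,
    eval₂_X_pow, eval₂_C, sub_eq_zero]

theorem isSplittingField_adjoin_simple_of_pow_eq (hζ : IsPrimitiveRoot ζ n) {β : L} {b : k}
    (hβ : β ^ n = algebraMap k L b) : IsSplittingField k k⟮β⟯ (X ^ n - C b) := by
  have hroots : (X ^ n - C b).rootSet L ⊆ (k⟮β⟯ : Set L) := fun x hx => by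
    rw [mem_rootSet_X_pow_sub_C, ← hβ] at hx
    obtain ⟨t, rfl⟩ := hζ.exists_eq_algebraMap_mul_of_pow_eq_pow hx
    exact mul_mem (IntermediateField.algebraMap_mem _ t) (mem_adjoin_simple_self k β)
  have hE : adjoin k ((X ^ n - C b).rootSet L) = k⟮β⟯ :=
    le_antisymm (adjoin_le_iff.mpr hroots)
      (adjoin_simple_le_iff.mpr (subset_adjoin _ _ (mem_rootSet_X_pow_sub_C.mpr hβ)))
  have hsplit : ((X ^ n - C b).map (algebraMap k L)).Splits := by
    rw [Polynomial.map_sub, Polynomial.map_pow, Polynomial.map_C, Polynomial.map_X]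
    exact X_pow_sub_C_splits_of_isPrimitiveRoot
      (hζ.map_of_injective (algebraMap k L).injective) hβ
  exact hE ▸ adjoin_rootSet_isSplittingField hsplit

theorem mem_adjoin_simple_iff_exists_eq_algebraMap_mul_zpow (hζ : IsPrimitiveRoot ζ n)
    {α β : L} {b : k} (hα : α ^ n ∈ Set.range (algebraMap k L)) (hβ : β ^ n = algebraMap k L b)
    (hb : b ≠ 0) : α ∈ k⟮β⟯ ↔ ∃ (c : k) (r : ℤ), α = algebraMap k L c * β ^ r := by
  refine ⟨fun hmem => ?_, ?_⟩
  · rcases eq_or_ne α 0 with rfl | hα0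
    · exact ⟨0, 0, by simp⟩
    have := isSplittingField_adjoin_simple_of_pow_eq hζ hβ
    have := IsSplittingField.finiteDimensional k⟮β⟯ (X ^ n - C b)
    have : IsGalois k k⟮β⟯ :=
      IsGalois.of_separable_splitting_field (separable_X_pow_sub_C b hζ.neZero'.out hb)
    let β' := AdjoinSimple.gen k β
    let α' : k⟮β⟯ := ⟨α, hmem⟩
    have hβ0 : β ≠ 0 := fun h => hb (by simpa [h, NeZero.ne n] using hβ.symm)
    have hβ'0 : β' ≠ 0 := fun h => hβ0 (congrArg Subtype.val h)
    have hβ'n : β' ^ n ∈ Set.range (algebraMap k k⟮β⟯) := ⟨b, Subtype.ext hβ.symm⟩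
    have hα'n : α' ^ n ∈ Set.range (algebraMap k k⟮β⟯) := by
      obtain ⟨a, ha⟩ := hα
      exact ⟨a, Subtype.ext ha⟩
    have hinj : Function.Injective (kummerCharacter hζ hβ'0 hβ'n) := by
      refine (injective_iff_map_eq_one _).mpr fun σ hσ =>
        AlgEquiv.coe_toAlgHom_injective (adjoin_algHom_ext k fun x hx => ?_)
      obtain rfl := Set.mem_singleton_iff.mp hx
      exact (div_eq_one_iff_eq hβ'0).mp hσ
    obtain ⟨c, r, h⟩ := exists_eq_algebraMap_mul_pow_of_injective_kummerCharacter hζ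
      (α := α') (fun h => hα0 (congrArg Subtype.val h)) hβ'0 hα'n hβ'n hinj
    exact ⟨c, r, by simpa [α', β'] using congrArg Subtype.val h⟩
  · rintro ⟨c, r, rfl⟩
    exact mul_mem (IntermediateField.algebraMap_mem _ c) (zpow_mem (mem_adjoin_simple_self k β) r)

theorem exists_eq_algebraMap_mul_zpow_iff (hζ : IsPrimitiveRoot ζ n) {α β : L} {a b : kˣ}
    (hα : α ^ n = algebraMap k L a) (hβ : β ^ n = algebraMap k L b) :
    (∃ (c : k) (r : ℤ), α = algebraMap k L c * β ^ r) ↔ ∃ (c : kˣ) (r : ℤ), a = c ^ n * b ^ r := by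
  have hpow (c : k) (r : ℤ) :
      (algebraMap k L c * β ^ r) ^ n = algebraMap k L (c ^ n * (b : k) ^ r) := by
    rw [mul_pow, ← zpow_natCast (β ^ r), ← zpow_mul, mul_comm r, zpow_mul, zpow_natCast, hβ,
      ← map_pow, ← map_zpow₀, ← map_mul]
  constructor
  · rintro ⟨c, r, hc⟩
    have hc0 : c ≠ 0 := by
      rintro rfl
      exact a.ne_zero (by simpa [hc, NeZero.ne n] using hα.symm)
    refine ⟨Units.mk0 c hc0, r, Units.ext <| (algebraMap k L).injective ?_⟩
    simp [← hα, hc, hpow]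
  · rintro ⟨c, r, rfl⟩
    obtain ⟨t, ht⟩ := hζ.exists_eq_algebraMap_mul_of_pow_eq_pow
      (x := α) (y := algebraMap k L c * β ^ r) (by rw [hα, hpow]; simp)
    exact ⟨t * c, r, by rw [ht, map_mul, mul_assoc]⟩

theorem adjoin_simple_le_adjoin_simple_iff (hζ : IsPrimitiveRoot ζ n) {α β : L} {a b : kˣ}
    (hα : α ^ n = algebraMap k L a) (hβ : β ^ n = algebraMap k L b) :
    k⟮α⟯ ≤ k⟮β⟯ ↔
      (QuotientGroup.mk a : kˣ ⧸ (powMonoidHom n : kˣ →* kˣ).range) ∈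
        Subgroup.zpowers (QuotientGroup.mk b) := by
  rw [adjoin_simple_le_iff, mem_adjoin_simple_iff_exists_eq_algebraMap_mul_zpow hζ ⟨a, hα.symm⟩ hβ
    b.ne_zero, exists_eq_algebraMap_mul_zpow_iff hζ hα hβ, QuotientGroup.mk_mem_zpowers_mk_iff]

end Kummer

theorem stmt_5_general {k K : Type*} [Field k] [Field K] [Algebra k K]
    (n : ℕ) (hn : 0 < n)
    (ζ : k) (hζ : IsPrimitiveRoot ζ n)
    (a b : kˣ) (α β : K)
    (hα : α ^ n = algebraMap k K (a : k)) (hβ : β ^ n = algebraMap k K (b : k)) :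
    IntermediateField.adjoin k ({α} : Set K) = IntermediateField.adjoin k ({β} : Set K)
      ↔ Subgroup.zpowers
            ((QuotientGroup.mk a : kˣ ⧸ (powMonoidHom n : kˣ →* kˣ).range))
          = Subgroup.zpowers
            ((QuotientGroup.mk b : kˣ ⧸ (powMonoidHom n : kˣ →* kˣ).range)) := by
  have : NeZero n := ⟨hn.ne'⟩
  rw [le_antisymm_iff, le_antisymm_iff, Subgroup.zpowers_le, Subgroup.zpowers_le,
    adjoin_simple_le_adjoin_simple_iff hζ hα hβ, adjoin_simple_le_adjoin_simple_iff hζ hβ hα]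

/-- Kummer theory: `k(ⁿ√a) = k(ⁿ√b)` iff `[a]` and `[b]` generate the same subgroup
of `k^× / (k^×)^n`. -/
theorem stmt_5 {k K : Type*} [Field k] [Field K] [Algebra k K] [IsAlgClosure k K]
    (n : ℕ) (hn : 0 < n) (hchar : (n : k) ≠ 0)
    (ζ : k) (hζ : IsPrimitiveRoot ζ n)
    (a b : kˣ) (α β : K)
    (hα : α ^ n = algebraMap k K (a : k)) (hβ : β ^ n = algebraMap k K (b : k)) :
    IntermediateField.adjoin k ({α} : Set K) = IntermediateField.adjoin k ({β} : Set K)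
      ↔ Subgroup.zpowers
            ((QuotientGroup.mk a : kˣ ⧸ (powMonoidHom n : kˣ →* kˣ).range))
          = Subgroup.zpowers
            ((QuotientGroup.mk b : kˣ ⧸ (powMonoidHom n : kˣ →* kˣ).range)) :=
  stmt_5_general n hn ζ hζ a b α β hα hβ
end

section
/- Let $k$ be a field containing all $n$-th roots of unity with $\mathrm{char}(k) \nmid n$, and let $a \in k^\times$. Then the order of the class $[a]$ in the group $k^\times/(k^\times)^n$ equals the degree $[k(\sqrt[n]{a}) : k]$. -/
/-!
Let `d = [k(α) : k]` and let `m` be the order of `[a]`. Taking norms from `k(α)` in `α ^ n = a` gives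
`N(α) ^ n = a ^ d`, so `m ∣ d`. Conversely `a ^ m = b ^ n` for some `b ∈ k`, so `α ^ m / b` is an `n`-th
root of unity, hence lies in `k`; thus `α` is a root of `X ^ m - α ^ m ∈ k[X]` and `d ≤ m`.
-/

open Polynomial IntermediateField

section

variable {k L : Type*} [Field k] [Field L] [Algebra k L]

theorem orderOf_mk_dvd_finrank_of_pow_eq {n : ℕ} (hn : n ≠ 0) (a : kˣ) {x : L}
    (hx : x ^ n = algebraMap k L a) :
    orderOf (QuotientGroup.mk a : kˣ ⧸ (powMonoidHom n : kˣ →* kˣ).range) ∣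
      Module.finrank k L := by
  have hnorm : Algebra.norm k x ^ n = (a : k) ^ Module.finrank k L := by
    rw [← map_pow, hx, Algebra.norm_algebraMap]
  have hnorm0 : Algebra.norm k x ≠ 0 := ne_zero_pow hn (hnorm ▸ pow_ne_zero _ a.ne_zero)
  apply orderOf_dvd_of_pow_eq_one
  rw [← QuotientGroup.mk_pow, QuotientGroup.eq_one_iff]
  exact ⟨Units.mk0 _ hnorm0, Units.ext (by simpa using hnorm)⟩

theorem IsPrimitiveRoot.exists_eq_algebraMap_of_pow_eq {n : ℕ} [NeZero n] {ζ : k}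
    (hζ : IsPrimitiveRoot ζ n) {x : L} {c : k} (hc : c ≠ 0)
    (hx : x ^ n = algebraMap k L (c ^ n)) : ∃ y, x = algebraMap k L y := by
  have hc' : algebraMap k L c ≠ 0 := (_root_.map_ne_zero _).mpr hc
  have hroot : (x / algebraMap k L c) ^ n = 1 := by
    rw [div_pow, hx, map_pow, div_self (pow_ne_zero _ hc')]
  obtain ⟨i, -, hi⟩ := (hζ.map_of_injective (algebraMap k L).injective).eq_pow_of_pow_eq_one hroot
  refine ⟨ζ ^ i * c, ?_⟩
  rw [map_mul, map_pow, hi, div_mul_cancel₀ _ hc']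

theorem finrank_adjoin_simple_le_of_pow_eq_algebraMap {m : ℕ} (hm : 0 < m) {x : L} {c : k}
    (hx : x ^ m = algebraMap k L c) : Module.finrank k k⟮x⟯ ≤ m := by
  have hint : IsIntegral k x := .of_pow hm (hx ▸ isIntegral_algebraMap)
  rw [adjoin.finrank hint, ← natDegree_X_pow_sub_C (n := m) (r := c)]
  exact natDegree_le_of_dvd (minpoly.dvd k x (by simp [hx])) (monic_X_pow_sub_C c hm.ne').ne_zero

end

theorem stmt_14_general {k K : Type*} [Field k] [Field K] [Algebra k K]
    (n : ℕ) (hn : 0 < n)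
    (ζ : k) (hζ : IsPrimitiveRoot ζ n)
    (a : kˣ) (α : K) (hα : α ^ n = algebraMap k K (a : k)) :
    orderOf ((QuotientGroup.mk a : kˣ ⧸ (powMonoidHom n : kˣ →* kˣ).range))
      = Module.finrank k (IntermediateField.adjoin k ({α} : Set K)) := by
  have : NeZero n := ⟨hn.ne'⟩
  have : FiniteDimensional k k⟮α⟯ :=
    adjoin.finiteDimensional (.of_pow hn (hα ▸ isIntegral_algebraMap))
  set m := orderOf (QuotientGroup.mk a : kˣ ⧸ (powMonoidHom n : kˣ →* kˣ).range)
  have hdvd : m ∣ Module.finrank k k⟮α⟯ :=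
    orderOf_mk_dvd_finrank_of_pow_eq hn.ne' a (x := AdjoinSimple.gen k α) (Subtype.ext hα)
  have hd : 0 < Module.finrank k k⟮α⟯ := Module.finrank_pos
  obtain ⟨b, hb⟩ : a ^ m ∈ (powMonoidHom n : kˣ →* kˣ).range := by
    rw [← QuotientGroup.eq_one_iff, QuotientGroup.mk_pow, pow_orderOf_eq_one]
  obtain ⟨c, hc⟩ : ∃ c, α ^ m = algebraMap k K c := by
    refine hζ.exists_eq_algebraMap_of_pow_eq b.ne_zero ?_
    rw [← pow_mul, mul_comm, pow_mul, hα, ← map_pow, ← Units.val_pow_eq_pow_val,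
      ← Units.val_pow_eq_pow_val, ← hb, powMonoidHom_apply]
  exact le_antisymm (Nat.le_of_dvd hd hdvd)
    (finrank_adjoin_simple_le_of_pow_eq_algebraMap (Nat.pos_of_dvd_of_pos hdvd hd) hc)

/-- Kummer theory: the order of `[a]` in `k^×/(k^×)^n` equals `[k(ⁿ√a) : k]`. -/
theorem stmt_14 {k K : Type*} [Field k] [Field K] [Algebra k K] [IsAlgClosure k K]
    (n : ℕ) (hn : 0 < n) (hchar : (n : k) ≠ 0)
    (ζ : k) (hζ : IsPrimitiveRoot ζ n)
    (a : kˣ) (α : K) (hα : α ^ n = algebraMap k K (a : k)) :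
    orderOf ((QuotientGroup.mk a : kˣ ⧸ (powMonoidHom n : kˣ →* kˣ).range))
      = Module.finrank k (IntermediateField.adjoin k ({α} : Set K)) :=
  stmt_14_general n hn ζ hζ a α hα
end

section
/- Let $k$ be a field containing a primitive $n$-th root of unity $\zeta$, with $\mathrm{char}(k) \nmid n$, and let $a, b \in k^\times$. Let $B_a$ and $B_b$ denote the $n \times n$ companion-type matrices of $x^n - a$ and $x^n - b$. If the classes $[a]$ and $[b]$ generate the same subgroup of $k^\times/(k^\times)^n$, then the centralizer algebras $\{M \in M_n(k) : M B_a = B_a M\}$ and $\{M \in M_n(k) : M B_b = B_b M\}$ are isomorphic as $k$-algebras. -/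
/-!
The centralizer of `B_a` is `k[B_a] ≅ k[x]/(xⁿ - a)`: the first basis vector `e₀` is cyclic for
`B_a`, so a matrix commuting with `B_a` is determined by its value on `e₀` and hence is a polynomial
in `B_a`; and since `e₀, B_a e₀, …, B_aⁿ⁻¹ e₀` is the standard basis, the minimal polynomial of
`B_a` is `xⁿ - a`. If `[b] = [a]ᵗ` with `t` prime to `n`, say `b = aᵗcⁿ`, then `y ↦ c xᵗ` defines
a homomorphism `k[y]/(yⁿ - b) → k[x]/(xⁿ - a)`. It is onto because `(c xᵗ)ᵖ` is a nonzero scalar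
multiple of `x` when `tp ≡ 1 (mod n)`, hence an isomorphism, both sides having dimension `n`.
-/

open Matrix Polynomial

section Companion

variable {R : Type*} [CommRing R] {n : ℕ}

/-- The matrix of multiplication by `x` on `R[x]/(xⁿ - a)` in the basis `1, x, …, xⁿ⁻¹`. -/
def companionXPowSubC (n : ℕ) (a : R) : Matrix (Fin n) (Fin n) R := fun i j =>
  if (i : ℕ) = 0 ∧ (j : ℕ) = n - 1 then a
  else if (i : ℕ) = (j : ℕ) + 1 then 1 else 0

lemma companionXPowSubC_mulVec_single_of_add_one_lt (a : R) {j : Fin n} (hj : (j : ℕ) + 1 < n) :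
    companionXPowSubC n a *ᵥ Pi.single j 1 = Pi.single ⟨j + 1, hj⟩ 1 := by
  ext i
  simp only [mulVec_single_one, col_apply, companionXPowSubC, Pi.single_apply, Fin.ext_iff]
  rw [if_neg (by omega)]

lemma companionXPowSubC_mulVec_single_of_add_one_eq [NeZero n] (a : R) {j : Fin n}
    (hj : (j : ℕ) + 1 = n) :
    companionXPowSubC n a *ᵥ Pi.single j 1 = a • Pi.single 0 1 := by
  ext i
  simp only [mulVec_single_one, col_apply, companionXPowSubC, Pi.smul_apply,
    Pi.single_apply, Fin.ext_iff, Fin.val_zero, smul_eq_mul, mul_ite, mul_one, mul_zero]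
  by_cases hi : (i : ℕ) = 0
  · rw [if_pos ⟨hi, by omega⟩, if_pos hi]
  · rw [if_neg (by omega), if_neg (by omega), if_neg hi]

lemma companionXPowSubC_pow_mulVec_single_zero [NeZero n] (a : R) (i : ℕ) (hi : i < n) :
    companionXPowSubC n a ^ i *ᵥ Pi.single 0 1 = Pi.single ⟨i, hi⟩ 1 := by
  induction i with
  | zero => rw [pow_zero, one_mulVec]; rfl
  | succ i ih =>
    rw [pow_succ', ← mulVec_mulVec, ih (by omega), companionXPowSubC_mulVec_single_of_add_one_lt]

lemma companionXPowSubC_pow_self [NeZero n] (a : R) :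
    companionXPowSubC n a ^ n = a • 1 := by
  set B := companionXPowSubC n a
  have hn : n - 1 + 1 = n := Nat.sub_add_cancel NeZero.one_le
  have hlast : B ^ n *ᵥ Pi.single 0 1 = a • Pi.single 0 1 := by
    rw [show B ^ n = B * B ^ (n - 1) by rw [← pow_succ', hn], ← mulVec_mulVec,
      companionXPowSubC_pow_mulVec_single_zero a (n - 1) (by omega),
      companionXPowSubC_mulVec_single_of_add_one_eq a hn]
  refine ext_of_mulVec_single fun j => ?_
  rw [← companionXPowSubC_pow_mulVec_single_zero a j j.isLt, mulVec_mulVec, pow_mul_comm,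
    ← mulVec_mulVec, hlast, mulVec_smul, smul_mulVec, one_mulVec]

lemma aeval_companionXPowSubC_X_pow_sub_C [NeZero n] (a : R) :
    aeval (companionXPowSubC n a) (X ^ n - C a) = 0 := by
  rw [map_sub, aeval_X_pow, aeval_C, companionXPowSubC_pow_self, Algebra.algebraMap_eq_smul_one,
    sub_self]

lemma aeval_companionXPowSubC_sum_mulVec_single_zero [NeZero n] (a : R) (w : Fin n → R) :
    aeval (companionXPowSubC n a) (∑ i : Fin n, C (w i) * X ^ (i : ℕ)) *ᵥ Pi.single 0 1 = w := by
  have hterm (i : Fin n) : aeval (companionXPowSubC n a) (C (w i) * X ^ (i : ℕ)) *ᵥ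
      Pi.single 0 1 = Pi.single i (w i) := by
    rw [map_mul, aeval_C, aeval_X_pow, Algebra.algebraMap_eq_smul_one, smul_mul_assoc, one_mul,
      smul_mulVec, companionXPowSubC_pow_mulVec_single_zero a i i.isLt, Fin.eta,
      ← Pi.single_smul', smul_eq_mul, mul_one]
  simp only [map_sum, sum_mulVec, hterm, Finset.univ_sum_single]

lemma aeval_companionXPowSubC_mulVec_single_zero [NeZero n] (a : R) {p : R[X]}
    (hp : p.natDegree < n) :
    aeval (companionXPowSubC n a) p *ᵥ Pi.single 0 1 = fun i : Fin n => p.coeff i := by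
  conv_lhs =>
    rw [p.as_sum_range_C_mul_X_pow' hp,
      ← Fin.sum_univ_eq_sum_range (fun i => C (p.coeff i) * X ^ i)]
  exact aeval_companionXPowSubC_sum_mulVec_single_zero a _

end Companion

theorem Matrix.centralizer_singleton_eq_adjoin_of_cyclic
    {R ι : Type*} [CommRing R] [Fintype ι] [DecidableEq ι] {M : Matrix ι ι R} (v : ι → R)
    (hv : ∀ w, ∃ p : R[X], aeval M p *ᵥ v = w) :
    Subalgebra.centralizer R {M} = Algebra.adjoin R {M} := by
  refine le_antisymm (fun N hN => ?_) fun N hN => ?_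
  · have hMN : Commute M N := (Subalgebra.mem_centralizer_iff R).1 hN M rfl
    obtain ⟨p, hp⟩ := hv (N *ᵥ v)
    suffices N = aeval M p by
      rw [this, Algebra.adjoin_singleton_eq_range_aeval]; exact ⟨p, rfl⟩
    refine ext_of_mulVec_single fun i => ?_
    obtain ⟨q, hq⟩ := hv (Pi.single i 1)
    have hNq : Commute N (aeval M q) := Algebra.commute_of_mem_adjoin_singleton_of_commute
      (aeval_mem_adjoin_singleton R M) hMN.symm
    have hpq : Commute (aeval M p) (aeval M q) := (Commute.all p q).map (aeval M)
    rw [← hq, mulVec_mulVec, mulVec_mulVec, hNq.eq, hpq.eq, ← mulVec_mulVec, ← mulVec_mulVec, hp]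
  · rw [Subalgebra.mem_centralizer_iff]
    rintro _ rfl
    exact (Algebra.commute_of_mem_adjoin_self hN).eq

section CompanionCentralizer

variable {n : ℕ} [NeZero n]

theorem centralizer_companionXPowSubC {R : Type*} [CommRing R] (a : R) :
    Subalgebra.centralizer R {companionXPowSubC n a} = Algebra.adjoin R {companionXPowSubC n a} :=
  centralizer_singleton_eq_adjoin_of_cyclic (Pi.single 0 1) fun w =>
    ⟨_, aeval_companionXPowSubC_sum_mulVec_single_zero a w⟩

variable {k : Type*} [Field k]

theorem minpoly_companionXPowSubC (a : k) : minpoly k (companionXPowSubC n a) = X ^ n - C a := by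
  refine (minpoly.unique _ _ (monic_X_pow_sub_C a (NeZero.ne n))
    (aeval_companionXPowSubC_X_pow_sub_C a) fun q hq hq0 => ?_).symm
  rw [degree_X_pow_sub_C (NeZero.pos n)]
  by_contra! hlt
  have hcoeff := aeval_companionXPowSubC_mulVec_single_zero a
    ((natDegree_lt_iff_degree_lt hq.ne_zero).2 hlt)
  rw [hq0, zero_mulVec] at hcoeff
  have := congrFun hcoeff ⟨q.natDegree, (natDegree_lt_iff_degree_lt hq.ne_zero).2 hlt⟩
  simp [hq.coeff_natDegree] at this

end CompanionCentralizer

noncomputable def adjoinSingletonEquivAdjoinRootMinpoly {k B : Type*} [Field k] [Ring B]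
    [Algebra k B] (x : B) : Algebra.adjoin k {x} ≃ₐ[k] AdjoinRoot (minpoly k x) :=
  (Subalgebra.equivOfEq _ _ (Algebra.adjoin_singleton_eq_range_aeval k x)).trans <|
    (Ideal.quotientKerEquivRange (aeval x)).symm.trans <|
      Ideal.quotientEquivAlgOfEq k (minpoly.ker_aeval_eq_span_minpoly k x)

noncomputable def centralizerCompanionXPowSubCEquiv {k : Type*} [Field k] {n : ℕ} [NeZero n]
    (a : k) :
    Subalgebra.centralizer k {companionXPowSubC n a} ≃ₐ[k] AdjoinRoot (X ^ n - C a) :=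
  (Subalgebra.equivOfEq _ _ (centralizer_companionXPowSubC a)).trans <|
    (adjoinSingletonEquivAdjoinRootMinpoly _).trans <|
      Ideal.quotientEquivAlgOfEq k (by rw [minpoly_companionXPowSubC])

theorem Nat.Coprime.exists_mul_eq_one_add_mul {t n : ℕ} (ht : 0 < t) (h : t.Coprime n) :
    ∃ p w, t * p = 1 + n * w := by
  rcases lt_or_ge n 2 with hn | hn
  · interval_cases n
    · exact ⟨1, 0, by simpa using h⟩
    · exact ⟨1, t - 1, by omega⟩
  · obtain ⟨p, -, hp⟩ := Nat.exists_mul_mod_eq_one_of_coprime h hn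
    exact ⟨p, t * p / n, by have := Nat.div_add_mod (t * p) n; omega⟩

theorem AdjoinRoot.nonempty_algEquiv_X_pow_sub_C_pow_mul_pow {k : Type*} [Field k] {n t : ℕ}
    (hn : 0 < n) (ht : 0 < t) (htn : t.Coprime n) {a c : k} (ha : a ≠ 0) (hc : c ≠ 0) :
    Nonempty (AdjoinRoot (X ^ n - C a) ≃ₐ[k] AdjoinRoot (X ^ n - C (a ^ t * c ^ n))) := by
  obtain ⟨p, w, hpw⟩ := htn.exists_mul_eq_one_add_mul ht
  have hma := monic_X_pow_sub_C a hn.ne'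
  have hmb := monic_X_pow_sub_C (a ^ t * c ^ n) hn.ne'
  set A := AdjoinRoot (X ^ n - C a)
  set α := root (X ^ n - C a)
  have hα : α ^ n = algebraMap k A a := by
    have h := aeval_eq (f := X ^ n - C a) (X ^ n - C a)
    rwa [mk_self, map_sub, aeval_X_pow, aeval_C, sub_eq_zero] at h
  set z : A := algebraMap k A c * α ^ t with hz_def
  have hz : aeval z (X ^ n - C (a ^ t * c ^ n)) = 0 := by
    rw [map_sub, aeval_X_pow, aeval_C, sub_eq_zero, hz_def, mul_pow, ← pow_mul, mul_comm t n,
      pow_mul, hα, ← map_pow, ← map_pow, ← map_mul, mul_comm]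
  set ψ := liftAlgHom (X ^ n - C (a ^ t * c ^ n)) (Algebra.ofId k A) z hz
  -- `tp = 1 + nw` and `αⁿ = a` put `α` in the algebra generated by `z = c αᵗ`.
  have hzp : z ^ p = algebraMap k A (c ^ p * a ^ w) * α := by
    rw [hz_def, mul_pow, ← pow_mul, hpw, pow_add, pow_one, pow_mul, hα, ← map_pow, ← map_pow,
      map_mul]
    ring
  have hsurj : Function.Surjective ψ := by
    rw [← AlgHom.range_eq_top, eq_top_iff, ← adjoinRoot_eq_top, Algebra.adjoin_le_iff,
      Set.singleton_subset_iff]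
    refine ⟨mk _ (C (c ^ p * a ^ w)⁻¹ * X ^ p), ?_⟩
    have hu : c ^ p * a ^ w ≠ 0 := mul_ne_zero (pow_ne_zero p hc) (pow_ne_zero w ha)
    change aeval z (C (c ^ p * a ^ w)⁻¹ * X ^ p) = α
    rw [map_mul, aeval_C, aeval_X_pow, hzp, ← mul_assoc, ← map_mul,
      inv_mul_cancel₀ hu, map_one, one_mul]
  have := hma.finite_adjoinRoot
  have := hmb.finite_adjoinRoot
  have hrank : Module.finrank k (AdjoinRoot (X ^ n - C (a ^ t * c ^ n))) = Module.finrank k A := by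
    rw [(powerBasis' hmb).finrank, (powerBasis' hma).finrank, powerBasis'_dim, powerBasis'_dim,
      natDegree_X_pow_sub_C, natDegree_X_pow_sub_C]
  have hinj : Function.Injective ψ :=
    (LinearMap.injective_iff_surjective_of_finrank_eq_finrank (f := ψ.toLinearMap) hrank).2 hsurj
  exact ⟨(AlgEquiv.ofBijective ψ ⟨hinj, hsurj⟩).symm⟩

theorem exists_coprime_pow_eq_of_zpowers_eq {G : Type*} [Group G] {n : ℕ} [NeZero n] {x y : G}
    (hx : x ^ n = 1) (h : Subgroup.zpowers x = Subgroup.zpowers y) :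
    ∃ t, 0 < t ∧ t.Coprime n ∧ x ^ t = y := by
  have hfin : IsOfFinOrder x := isOfFinOrder_iff_pow_eq_one.2 ⟨n, NeZero.pos n, hx⟩
  have hdvd : orderOf x ∣ n := orderOf_dvd_of_pow_eq_one hx
  obtain ⟨s, rfl⟩ : y ∈ Submonoid.powers x :=
    hfin.mem_powers_iff_mem_zpowers.2 (h ▸ Subgroup.mem_zpowers y)
  have hs : s.Coprime (orderOf x) := by
    have hord : orderOf (x ^ s) = orderOf x := by rw [← Nat.card_zpowers, ← Nat.card_zpowers, h]
    rw [hfin.orderOf_pow, Nat.div_eq_self] at hord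
    exact Nat.coprime_comm.1 (hord.resolve_left hfin.orderOf_pos.ne')
  -- `s` is a unit modulo `orderOf x ∣ n`; lift it to a unit modulo `n`.
  obtain ⟨u, hu⟩ := ZMod.unitsMap_surjective hdvd (ZMod.unitOfCoprime s hs)
  refine ⟨(u : ZMod n).val + n, by have := NeZero.pos n; omega,
    Nat.coprime_add_self_left.2 (ZMod.val_coe_unit_coprime u), ?_⟩
  rw [pow_add, hx, mul_one, pow_eq_pow_iff_modEq, ← ZMod.natCast_eq_natCast_iff, ← ZMod.cast_eq_val,
    ← ZMod.unitsMap_val hdvd, hu, ZMod.coe_unitOfCoprime]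

theorem exists_eq_pow_mul_pow_of_zpowers_mk_eq {G : Type*} [CommGroup G] {n : ℕ} [NeZero n]
    {a b : G}
    (h : Subgroup.zpowers (QuotientGroup.mk a : G ⧸ (powMonoidHom n : G →* G).range) =
      Subgroup.zpowers (QuotientGroup.mk b)) :
    ∃ t c, 0 < t ∧ t.Coprime n ∧ b = a ^ t * c ^ n := by
  have ha : (QuotientGroup.mk a : G ⧸ (powMonoidHom n : G →* G).range) ^ n = 1 := by
    rw [← QuotientGroup.mk_pow, QuotientGroup.eq_one_iff]
    exact ⟨a, rfl⟩
  obtain ⟨t, ht, htn, hab⟩ := exists_coprime_pow_eq_of_zpowers_eq ha h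
  obtain ⟨c, hc⟩ := QuotientGroup.eq.1 ((QuotientGroup.mk_pow _ a t).trans hab)
  refine ⟨t, c, ht, htn, ?_⟩
  rw [powMonoidHom_apply] at hc
  rw [hc, mul_inv_cancel_left]

theorem stmt_17_general {k : Type*} [Field k] (n : ℕ)
    (a b : kˣ) (Ba Bb : Matrix (Fin n) (Fin n) k)
    (hBa : ∀ i j : Fin n, Ba i j =
      if (i : ℕ) = 0 ∧ (j : ℕ) = n - 1 then (a : k)
      else if (i : ℕ) = (j : ℕ) + 1 then 1 else 0)
    (hBb : ∀ i j : Fin n, Bb i j =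
      if (i : ℕ) = 0 ∧ (j : ℕ) = n - 1 then (b : k)
      else if (i : ℕ) = (j : ℕ) + 1 then 1 else 0)
    (hgen : Subgroup.zpowers
        ((QuotientGroup.mk a : kˣ ⧸ (powMonoidHom n : kˣ →* kˣ).range))
      = Subgroup.zpowers
        ((QuotientGroup.mk b : kˣ ⧸ (powMonoidHom n : kˣ →* kˣ).range))) :
    Nonempty (Subalgebra.centralizer k ({Ba} : Set (Matrix (Fin n) (Fin n) k))
      ≃ₐ[k] Subalgebra.centralizer k ({Bb} : Set (Matrix (Fin n) (Fin n) k))) := by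
  rcases Nat.eq_zero_or_pos n with rfl | hn
  · exact ⟨Subalgebra.equivOfEq _ _ (by rw [Subsingleton.elim Ba Bb])⟩
  have : NeZero n := ⟨hn.ne'⟩
  obtain rfl : Ba = companionXPowSubC n (a : k) := Matrix.ext hBa
  obtain rfl : Bb = companionXPowSubC n (b : k) := Matrix.ext hBb
  obtain ⟨t, c, ht, htn, rfl⟩ := exists_eq_pow_mul_pow_of_zpowers_mk_eq hgen
  obtain ⟨e⟩ := AdjoinRoot.nonempty_algEquiv_X_pow_sub_C_pow_mul_pow hn ht htn a.ne_zero c.ne_zero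
  rw [← Units.val_pow_eq_pow_val, ← Units.val_pow_eq_pow_val, ← Units.val_mul] at e
  exact ⟨(centralizerCompanionXPowSubCEquiv _).trans
    (e.trans (centralizerCompanionXPowSubCEquiv _).symm)⟩

/-- If `[a]` and `[b]` generate the same subgroup of `k^×/(k^×)^n`, then the
centralizer algebras of the companion-type matrices `B_a` and `B_b` are isomorphic
as `k`-algebras. -/
theorem stmt_17 {k : Type*} [Field k] (n : ℕ) (hn : 0 < n) (hchar : (n : k) ≠ 0)
    (ζ : k) (hζ : IsPrimitiveRoot ζ n)
    (a b : kˣ) (Ba Bb : Matrix (Fin n) (Fin n) k)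
    (hBa : ∀ i j : Fin n, Ba i j =
      if (i : ℕ) = 0 ∧ (j : ℕ) = n - 1 then (a : k)
      else if (i : ℕ) = (j : ℕ) + 1 then 1 else 0)
    (hBb : ∀ i j : Fin n, Bb i j =
      if (i : ℕ) = 0 ∧ (j : ℕ) = n - 1 then (b : k)
      else if (i : ℕ) = (j : ℕ) + 1 then 1 else 0)
    (hgen : Subgroup.zpowers
        ((QuotientGroup.mk a : kˣ ⧸ (powMonoidHom n : kˣ →* kˣ).range))
      = Subgroup.zpowers
        ((QuotientGroup.mk b : kˣ ⧸ (powMonoidHom n : kˣ →* kˣ).range))) :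
    Nonempty (Subalgebra.centralizer k ({Ba} : Set (Matrix (Fin n) (Fin n) k))
      ≃ₐ[k] Subalgebra.centralizer k ({Bb} : Set (Matrix (Fin n) (Fin n) k))) :=
  stmt_17_general n a b Ba Bb hBa hBb hgen
end
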